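/- Every inductive poset is divisional: if P ∈ IP then P ∈ DP. -/

import Mathlib

open scoped Classical
open Polynomial

noncomputable section

namespace PosetArr

/-- The rank of an element of a poset: the length of the longest chain
strictly below it. In a ranked poset this is the common length of all maximal
chains with greatest element `x`. -/
noncomputable def rk {α : Type*} [Preorder α] (x : α) : ℕ :=
  (Set.chainHeight (Set.Iio x) (· < ·)).toNat

/-- The rank of a (finite) poset: the maximal rank of an element. -/
noncomputable def prk (α : Type*) [Preorder α] [Fintype α] : ℕ :=
  Finset.univ.sup (rk (α := α))

/-- A finite poset is ranked iff covering relations increase `rk` by one;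
equivalently, for every `x` all maximal chains with greatest element `x`
have the same length. -/
def IsRanked (α : Type*) [Preorder α] : Prop :=
  ∀ x y : α, x ⋖ y → rk y = rk x + 1

/-- The set of atoms (elements of rank 1) of a poset. -/
def atoms (α : Type*) [Preorder α] : Set α := {x : α | rk x = 1}

/-- `joinSet T` is the join `⋁ T`: the set of minimal upper bounds of `T`. -/
def joinSet {α : Type*} [PartialOrder α] (T : Set α) : Set α :=
  {z | z ∈ upperBounds T ∧ ∀ w ∈ upperBounds T, w ≤ z → w = z}

/-- `meetSet T` is the meet `⋀ T`: the set of maximal lower bounds of `T`. -/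
def meetSet {α : Type*} [PartialOrder α] (T : Set α) : Set α :=
  {z | z ∈ lowerBounds T ∧ ∀ w ∈ lowerBounds T, z ≤ w → w = z}

/-- A poset is a lattice if any two elements have a unique minimal upper
bound and a unique maximal lower bound. -/
def IsLatticePoset (α : Type*) [PartialOrder α] : Prop :=
  ∀ x y : α, (∃! z, z ∈ joinSet {x, y}) ∧ (∃! z, z ∈ meetSet {x, y})

/-- A (finite) lattice is geometric if for all `x, y`: `y` covers `x` iff
there is an atom `a` with `a ≰ x` and `y = x ∨ a`. -/
def IsGeomLattice (α : Type*) [PartialOrder α] : Prop :=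
  IsLatticePoset α ∧
    ∀ x y : α, x ⋖ y ↔ ∃ a : α, a ∈ atoms α ∧ ¬a ≤ x ∧ y ∈ joinSet {x, a}

/-- A finite ranked poset is locally geometric if every lower interval
`P_{≤ x}` is a geometric lattice. -/
def IsLocallyGeometric (α : Type*) [PartialOrder α] : Prop :=
  IsRanked α ∧ ∀ x : α, IsGeomLattice {y : α // y ≤ x}

/-- The Möbius function of a finite poset. -/
noncomputable def mob {α : Type*} [PartialOrder α] [Fintype α] (a b : α) : ℤ :=
  if a = b then 1
  else if a < b then
    - ∑ c ∈ (Finset.univ.filter (fun c : α => a ≤ c ∧ c < b)).attach, mob a c.1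
  else 0
termination_by (Finset.univ.filter (fun c : α => c ≤ b)).card
decreasing_by
  have hc := c.2
  simp only [Finset.mem_filter, Finset.mem_univ, true_and] at hc
  apply Finset.card_lt_card
  constructor
  · intro z hz
    simp only [Finset.mem_filter, Finset.mem_univ, true_and] at hz ⊢
    exact hz.trans hc.2.le
  · intro hsub
    have hb : b ∈ Finset.univ.filter (fun z : α => z ≤ b) := by
      simp
    have := hsub hb
    simp only [Finset.mem_filter, Finset.mem_univ, true_and] at this
    exact absurd (lt_of_le_of_lt this hc.2) (lt_irrefl _)

/-- The characteristic polynomial of a finite ranked poset with `0̂`: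
`χ_P(t) = ∑_x μ(0̂,x) t^(rk(P) - rk(x))`. -/
noncomputable def charPoly (α : Type*) [PartialOrder α] [Fintype α] [OrderBot α] :
    Polynomial ℤ :=
  ∑ x : α, Polynomial.C (mob ⊥ x) * Polynomial.X ^ (prk α - rk x)

/-- The subposet of `P` generated by a set `B` of atoms: the minimal element
together with all joins of subsets of `B`. -/
def genSub {α : Type*} [PartialOrder α] [OrderBot α] (B : Set α) : Set α :=
  insert ⊥ {z | ∃ T ⊆ B, z ∈ joinSet T}

instance upperOrderBot {α : Type*} [PartialOrder α] (a : α) :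
    OrderBot {y : α // a ≤ y} where
  bot := ⟨a, le_rfl⟩
  bot_le y := y.2

instance genSubOrderBot {α : Type*} [PartialOrder α] [OrderBot α] (B : Set α) :
    OrderBot {y : α // y ∈ genSub B} where
  bot := ⟨⊥, Set.mem_insert _ _⟩
  bot_le y := bot_le

/-- `OrderBot` structure on a down-set containing `⊥`. -/
def subsetOrderBot {α : Type*} [PartialOrder α] [OrderBot α] {Q : Set α}
    (h : ⊥ ∈ Q) : OrderBot {y : α // y ∈ Q} where
  bot := ⟨⊥, h⟩
  bot_le y := bot_le

/-- The class of inductive posets: the smallest class of locally geometric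
posets containing the one-element poset and closed under the addition step:
`P ∈ IP` whenever there is an atom `a` such that `P'' = P_{≥a} ∈ IP`,
`P' = P(A(P) \ {a}) ∈ IP` and `χ_{P''} ∣ χ_{P'}`. -/
inductive IsInductivePoset :
    ∀ (β : Type) (po : PartialOrder β) (fin : Fintype β) (bo : OrderBot β), Prop where
  | triv (β : Type) [po : PartialOrder β] [fin : Fintype β] [bo : OrderBot β]
      (h : ∀ x : β, x = ⊥) : IsInductivePoset β po fin bo
  | step (β : Type) [po : PartialOrder β] [fin : Fintype β] [bo : OrderBot β]
      (hLG : IsLocallyGeometric β) (a : β) (ha : a ∈ atoms β)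
      (hres : IsInductivePoset {y : β // a ≤ y} inferInstance inferInstance inferInstance)
      (hdel : IsInductivePoset {y : β // y ∈ genSub (atoms β \ {a})}
        inferInstance inferInstance inferInstance)
      (hdvd : charPoly {y : β // a ≤ y} ∣ charPoly {y : β // y ∈ genSub (atoms β \ {a})}) :
      IsInductivePoset β po fin bo

/-- The class of divisional posets: the smallest class of locally geometric
posets containing the one-element poset and closed under:
`P ∈ DP` whenever there is an atom `a` such that `P'' = P_{≥a} ∈ DP`
and `χ_{P''} ∣ χ_P`. -/
inductive IsDivisionalPoset :
    ∀ (β : Type) (po : PartialOrder β) (fin : Fintype β) (bo : OrderBot β), Prop where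
  | triv (β : Type) [po : PartialOrder β] [fin : Fintype β] [bo : OrderBot β]
      (h : ∀ x : β, x = ⊥) : IsDivisionalPoset β po fin bo
  | step (β : Type) [po : PartialOrder β] [fin : Fintype β] [bo : OrderBot β]
      (hLG : IsLocallyGeometric β) (a : β) (ha : a ∈ atoms β)
      (hres : IsDivisionalPoset {y : β // a ≤ y} inferInstance inferInstance inferInstance)
      (hdvd : charPoly {y : β // a ≤ y} ∣ charPoly β) :
      IsDivisionalPoset β po fin bo

/-- An element `m` of a (geometric) lattice is modular if
`m ∧ (y ∨ z) = (m ∧ y) ∨ z` for all `z ≤ m` and all `y`. Joins and meets are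
expressed via `joinSet` and `meetSet`. -/
def IsModular {β : Type*} [PartialOrder β] (m : β) : Prop :=
  ∀ z y j mj my r : β, z ≤ m →
    j ∈ joinSet {y, z} → mj ∈ meetSet {m, j} →
    my ∈ meetSet {m, y} → r ∈ joinSet {my, z} → mj = r

/-- `Q` is an M-ideal of the locally geometric poset `β`. -/
def IsMIdeal (β : Type*) [PartialOrder β] (Q : Set β) : Prop :=
  IsLowerSet Q ∧
  (∀ x y : β, Maximal (· ∈ Q) x → Maximal (· ∈ Q) y → rk x = rk y) ∧
  (∀ T ⊆ Q, joinSet T ⊆ Q) ∧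
  (∀ y ∈ Q, ∀ a ∈ atoms β, a ∉ Q → (joinSet {a, y}).Nonempty) ∧
  (∀ x : β, IsMax x → ∃ y, Maximal (· ∈ Q) y ∧
    ∃ h : y ≤ x, IsModular (⟨y, h⟩ : {u : β // u ≤ x}))

/-- `Q` is a TM-ideal of the locally geometric poset `β`: an M-ideal where
moreover `|a ∨ y| = 1` for `y ∈ Q` and atoms `a ∉ Q`. -/
def IsTMIdeal (β : Type*) [PartialOrder β] (Q : Set β) : Prop :=
  IsMIdeal β Q ∧ ∀ y ∈ Q, ∀ a ∈ atoms β, a ∉ Q → ∃! z, z ∈ joinSet {a, y}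

/-- A locally geometric poset is supersolvable if it admits an M-chain
`{0̂} = Q_0 ⊊ Q_1 ⊊ ⋯ ⊊ Q_r = P` with each `Q_i` an M-ideal of `Q_{i+1}`
and `rk(Q_i) = i`. -/
def IsSupersolvable (β : Type*) [PartialOrder β] [Fintype β] [OrderBot β] : Prop :=
  ∃ Q : Fin (prk β + 1) → Set β,
    Q 0 = {⊥} ∧ Q (Fin.last _) = Set.univ ∧
    (∀ i : Fin (prk β), Q i.castSucc ⊂ Q i.succ) ∧
    (∀ i : Fin (prk β + 1), prk {y : β // y ∈ Q i} = i) ∧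
    ∀ i : Fin (prk β),
      IsMIdeal {y : β // y ∈ Q i.succ} {z : {y : β // y ∈ Q i.succ} | (z : β) ∈ Q i.castSucc}

/-- A locally geometric poset is strictly supersolvable if it admits a
TM-chain as above, with each `Q_i` a TM-ideal of `Q_{i+1}`. -/
def IsStrictlySupersolvable (β : Type*) [PartialOrder β] [Fintype β] [OrderBot β] : Prop :=
  ∃ Q : Fin (prk β + 1) → Set β,
    Q 0 = {⊥} ∧ Q (Fin.last _) = Set.univ ∧
    (∀ i : Fin (prk β), Q i.castSucc ⊂ Q i.succ) ∧
    (∀ i : Fin (prk β + 1), prk {y : β // y ∈ Q i} = i) ∧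
    ∀ i : Fin (prk β),
      IsTMIdeal {y : β // y ∈ Q i.succ} {z : {y : β // y ∈ Q i.succ} | (z : β) ∈ Q i.castSucc}

end PosetArr

end

/-!
In a locally geometric poset a set of atoms may have several minimal upper bounds, but below any
element it has at most one. This is enough for the cross-cut theorem: `μ(0̂, x)` is the signed
count `∑ (-1)^|S|` of the sets `S` of atoms with `x` a minimal upper bound of `S`. Hence
`χ_P(t) = ∑_S (-1)^|S| ∑_{x ∈ ⋁S} t^(rk P - rk x)`, and splitting the sum according to whether
`a ∈ S` gives the deletion–restriction formula
`χ_P = t^(rk P - rk P') χ_{P'} - t^(rk P - rk P'' - 1) χ_{P''}`: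
the joins of sets `S ∌ a` are the elements of `P'`, whose ranks in `P'` and `P` agree because
covers in `P'` are covers in `P`, while the joins of sets `S ∋ a` are computed in `P'' = P_{≥a}`,
where ranks drop by one. So `χ_{P''} ∣ χ_{P'}` gives `χ_{P''} ∣ χ_P`, and the theorem follows by
induction on `P ∈ IP`.
-/

namespace PosetArr

section Rank

variable {β : Type*} [PartialOrder β]

lemma rk_Iic (x : β) (z : {y : β // y ≤ x}) : rk z = rk (z : β) := by
  have himg : Subtype.val '' Set.Iio z = Set.Iio (z : β) := by
    ext w
    exact ⟨fun ⟨u, hu, huw⟩ => huw ▸ hu, fun hw => ⟨⟨w, hw.le.trans z.2⟩, hw, rfl⟩⟩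
  rw [rk, rk, ← himg]
  exact congrArg ENat.toNat
    (Set.chainHeight_eq_of_relEmbedding _ (Subtype.relEmbedding (· < ·) (· ≤ x))).symm

lemma mem_atoms_iff {b : β} : b ∈ atoms β ↔ rk b = 1 := Iff.rfl

lemma rk_bot [OrderBot β] : rk (⊥ : β) = 0 := by
  simp [rk]

variable [Fintype β]

lemma natCast_rk (x : β) : (rk x : ℕ∞) = (Set.Iio x).chainHeight (· < ·) :=
  ENat.natCast_toNat (Set.chainHeight_ne_top_of_finite _ _ (Set.toFinite _))

lemma rk_lt_rk {x y : β} (h : x < y) : rk x < rk y := by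
  obtain ⟨t, ht, hte, htc⟩ :=
    Set.exists_eq_chainHeight_of_finite (Set.Iio x) (· < ·) (Set.toFinite _)
  have hxt : x ∉ t := fun hx => lt_irrefl x (ht hx)
  have hchain : IsChain (· < ·) (insert x t) := htc.insert fun b hb _ => Or.inr (ht hb)
  have hsub : insert x t ⊆ Set.Iio y := Set.insert_subset h fun z hz => (ht hz).trans h
  have := Set.encard_le_chainHeight_of_isChain _ _ hsub hchain
  rw [Set.encard_insert_of_notMem hxt, hte, ← natCast_rk, ← natCast_rk] at this
  exact_mod_cast ENat.add_one_le_iff (ENat.natCast_ne_top _) |>.mp this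

lemma rk_mono : Monotone (rk : β → ℕ) := fun _ _ h =>
  h.eq_or_lt.elim (fun h => h ▸ le_rfl) fun h => (rk_lt_rk h).le

lemma exists_covBy_rk_eq_add_one {x : β} (hx : ¬ IsMin x) :
    ∃ y, y ⋖ x ∧ rk x = rk y + 1 := by
  obtain ⟨t, ht, hte, htc⟩ :=
    Set.exists_eq_chainHeight_of_finite (Set.Iio x) (· < ·) (Set.toFinite _)
  have hne : t.Nonempty := by
    rw [← Set.one_le_encard_iff_nonempty, hte, Set.one_le_chainHeight_iff]
    simpa [IsMin, not_forall] using hx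
  obtain ⟨y, hy⟩ := (Set.toFinite t).exists_maximal hne
  have hbelow : t \ {y} ⊆ Set.Iio y := fun w ⟨hwt, hwy⟩ =>
    (htc hwt hy.1 hwy).resolve_right fun hyw => hy.not_gt hwt hyw
  have hle : t.encard ≤ rk y + 1 := by
    rw [← Set.encard_sdiff_singleton_add_one hy.1, natCast_rk]
    gcongr
    exact Set.encard_le_chainHeight_of_isChain _ _ hbelow (htc.mono Set.sdiff_subset)
  obtain ⟨z, hyz, hzx⟩ := exists_le_covBy_of_lt (ht hy.1)
  refine ⟨z, hzx, le_antisymm ?_ (rk_lt_rk hzx.lt)⟩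
  rw [hte, ← natCast_rk] at hle
  have : rk x ≤ rk y + 1 := by exact_mod_cast hle
  have := rk_mono hyz
  omega

variable [OrderBot β]

lemma mem_atoms_iff_bot_covBy {b : β} : b ∈ atoms β ↔ ⊥ ⋖ b := by
  refine ⟨fun hb => ⟨?_, fun z hz hzb => ?_⟩, fun hb => ?_⟩
  · refine bot_lt_iff_ne_bot.mpr fun h => ?_
    rw [mem_atoms_iff, h, rk_bot] at hb
    omega
  · have := rk_lt_rk hz
    have := rk_lt_rk hzb
    rw [rk_bot] at *
    rw [mem_atoms_iff] at hb
    omega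
  · obtain ⟨y, hyb, hrk⟩ := exists_covBy_rk_eq_add_one (not_isMin_of_lt hb.lt)
    obtain rfl : ⊥ = y := ((hb.eq_or_eq bot_le hyb.le).resolve_right hyb.ne).symm
    rwa [rk_bot] at hrk

lemma exists_mem_atoms_le {x : β} (hx : x ≠ ⊥) : ∃ b ∈ atoms β, b ≤ x := by
  obtain ⟨b, hb, hbx⟩ := exists_covBy_le_of_lt (bot_lt_iff_ne_bot.mpr hx)
  exact ⟨b, mem_atoms_iff_bot_covBy.mpr hb, hbx⟩

lemma ne_bot_of_mem_atoms {b : β} (hb : b ∈ atoms β) : b ≠ ⊥ :=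
  (mem_atoms_iff_bot_covBy.mp hb).lt.ne'

lemma eq_of_mem_atoms_of_le {a b : β} (ha : a ∈ atoms β) (hb : b ∈ atoms β) (h : b ≤ a) :
    b = a :=
  ((mem_atoms_iff_bot_covBy.mp ha).eq_or_eq bot_le h).resolve_left (ne_bot_of_mem_atoms hb)

end Rank

lemma rk_apply_eq_rk_add_of_covBy {β γ : Type*} [PartialOrder β] [PartialOrder γ] [Fintype γ]
    [OrderBot γ]
    (hβ : IsRanked β) (e : γ ↪o β) (he : ∀ x y, x ⋖ y → e x ⋖ e y) (x : γ) :
    rk (e x) = rk x + rk (e ⊥) := by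
  induction x using WellFoundedLT.induction with
  | _ x ih =>
    rcases eq_or_ne x ⊥ with rfl | hx
    · rw [rk_bot, zero_add]
    obtain ⟨y, hyx, hrk⟩ := exists_covBy_rk_eq_add_one (not_isMin_of_lt (bot_lt_iff_ne_bot.mpr hx))
    rw [hβ _ _ (he y x hyx), ih y hyx.lt, hrk]
    ring

section Join

variable {γ : Type*} [PartialOrder γ]

lemma joinSet_empty [OrderBot γ] : joinSet (∅ : Set γ) = {⊥} := by
  ext z
  simp only [joinSet, upperBounds_empty, Set.mem_univ, true_and, forall_const]
  refine ⟨fun h => (h ⊥ bot_le).symm, ?_⟩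
  rintro rfl w hw
  exact le_antisymm hw bot_le

lemma exists_mem_joinSet_le [Finite γ] {S : Set γ} {w : γ} (hw : w ∈ upperBounds S) :
    ∃ j ∈ joinSet S, j ≤ w := by
  obtain ⟨j, hjw, hj⟩ := Finite.exists_le_minimal (p := (· ∈ upperBounds S)) hw
  exact ⟨j, ⟨hj.1, fun u hu huj => le_antisymm huj (hj.2 hu huj)⟩, hjw⟩

lemma IsLatticePoset.exists_isLeast_upperBounds_pair [Finite γ] (hL : IsLatticePoset γ)
    (x y : γ) : ∃ j, IsLeast (upperBounds {x, y}) j := by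
  obtain ⟨j, hj, huniq⟩ := (hL x y).1
  refine ⟨j, hj.1, fun w hw => ?_⟩
  obtain ⟨m, hm, hmw⟩ := exists_mem_joinSet_le hw
  exact huniq m hm ▸ hmw

lemma IsLatticePoset.exists_isLeast_upperBounds [Finite γ] [OrderBot γ]
    (hL : IsLatticePoset γ) (S : Set γ) : ∃ j, IsLeast (upperBounds S) j := by
  induction S, S.toFinite using Set.Finite.induction_on with
  | empty => exact ⟨⊥, by simp, fun _ _ => bot_le⟩
  | @insert a S _ _ ih =>
    obtain ⟨u, hu⟩ := ih
    obtain ⟨v, hv⟩ := hL.exists_isLeast_upperBounds_pair a u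
    have hS : ∀ w, w ∈ upperBounds S ↔ u ≤ w :=
      fun w => ⟨fun h => hu.2 h, fun h _ hs => (hu.1 hs).trans h⟩
    have : upperBounds (insert a S) = upperBounds {a, u} := by
      ext w
      simp [upperBounds_insert, hS]
    exact ⟨v, this ▸ hv⟩

lemma mem_genSub_iff [OrderBot γ] {B : Set γ} {z : γ} :
    z ∈ genSub B ↔ ∃ T ⊆ B, z ∈ joinSet T := by
  refine ⟨?_, fun h => Set.mem_insert_of_mem _ h⟩
  rintro (rfl | h)
  · exact ⟨∅, Set.empty_subset _, by simp [joinSet_empty]⟩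
  · exact h

end Join

lemma coe_covBy_coe_iff_of_ordConnected {β : Type*} [PartialOrder β] {p : β → Prop}
    (hp : {x | p x}.OrdConnected) {u v : Subtype p} : (u : β) ⋖ v ↔ u ⋖ v :=
  Set.OrdConnected.apply_covBy_apply_iff (OrderEmbedding.subtype p) (by simpa using hp)

namespace IsLocallyGeometric

variable {β : Type*} [PartialOrder β] [Fintype β]

lemma exists_mem_atoms_ne_le (hLG : IsLocallyGeometric β) {a y : β} (hay : a < y) :
    ∃ b ∈ atoms β, b ≠ a ∧ b ≤ y := by
  obtain ⟨w, haw, hwy⟩ := exists_le_covBy_of_lt hay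
  obtain ⟨b, hb, hbw, -⟩ := ((hLG.2 y).2 ⟨w, hwy.le⟩ ⟨y, le_rfl⟩).mp
    ((coe_covBy_coe_iff_of_ordConnected Set.ordConnected_Iic).mp hwy)
  refine ⟨b, (rk_Iic y b).symm.trans hb, fun h => hbw ?_, b.2⟩
  rw [← Subtype.coe_le_coe, h]
  exact haw

variable [OrderBot β]

lemma exists_isLeast_upperBounds_inter_Iic (hLG : IsLocallyGeometric β) {x : β} {S : Set β}
    (hS : S ⊆ Set.Iic x) : ∃ j, IsLeast (upperBounds S ∩ Set.Iic x) j := by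
  let _ : OrderBot {y : β // y ≤ x} := { bot := ⟨⊥, bot_le⟩, bot_le := fun _ => bot_le }
  obtain ⟨j, hj_ub, hj_least⟩ :=
    (hLG.2 x).1.exists_isLeast_upperBounds (Subtype.val ⁻¹' S : Set {y : β // y ≤ x})
  have hub : ∀ w : {y : β // y ≤ x}, w ∈ upperBounds (Subtype.val ⁻¹' S) ↔
      (w : β) ∈ upperBounds S :=
    fun w => ⟨fun hw s hs => hw (show (⟨s, hS hs⟩ : {y : β // y ≤ x}) ∈ _ from hs),
      fun hw s hs => hw hs⟩
  exact ⟨j, ⟨(hub j).mp hj_ub, j.2⟩, fun w ⟨hw, hwx⟩ => hj_least ((hub ⟨w, hwx⟩).mpr hw)⟩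

lemma exists_mem_joinSet_le (hLG : IsLocallyGeometric β) {x : β} {S : Set β}
    (hS : S ⊆ Set.Iic x) : ∃ j ∈ joinSet S, j ≤ x := by
  obtain ⟨j, ⟨hj_ub, hjx⟩, hj_least⟩ := hLG.exists_isLeast_upperBounds_inter_Iic hS
  exact ⟨j, ⟨hj_ub, fun w hw hwj => le_antisymm hwj (hj_least ⟨hw, hwj.trans hjx⟩)⟩, hjx⟩

lemma eq_of_mem_joinSet_of_le (hLG : IsLocallyGeometric β) {x j j' : β} {S : Set β}
    (hj : j ∈ joinSet S) (hjx : j ≤ x) (hj' : j' ∈ joinSet S) (hj'x : j' ≤ x) : j = j' := by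
  obtain ⟨m, ⟨hm_ub, -⟩, hm_least⟩ :=
    hLG.exists_isLeast_upperBounds_inter_Iic fun s hs => (hj.1 hs).trans hjx
  have hmj : m = j := hj.2 m hm_ub (hm_least ⟨hj.1, hjx⟩)
  have hmj' : m = j' := hj'.2 m hm_ub (hm_least ⟨hj'.1, hj'x⟩)
  rw [← hmj, hmj']

lemma card_filter_le_and_mem_joinSet (hLG : IsLocallyGeometric β) (x : β) (S : Set β) :
    (Finset.univ.filter fun z => z ≤ x ∧ z ∈ joinSet S).card =
      if S ⊆ Set.Iic x then 1 else 0 := by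
  split_ifs with hS
  · obtain ⟨j, hj, hjx⟩ := hLG.exists_mem_joinSet_le hS
    refine Finset.card_eq_one.mpr
      ⟨j, Finset.eq_singleton_iff_unique_mem.mpr ⟨by simp [hj, hjx], ?_⟩⟩
    simp only [Finset.mem_filter, Finset.mem_univ, true_and, and_imp]
    exact fun z hzx hz => hLG.eq_of_mem_joinSet_of_le hz hzx hj hjx
  · refine Finset.card_eq_zero.mpr (Finset.filter_eq_empty_iff.mpr fun z _ ⟨hzx, hz⟩ => ?_)
    exact hS fun s hs => (hz.1 hs).trans hzx

lemma exists_covBy_mem_joinSet_pair (hLG : IsLocallyGeometric β) {x z t : β} (hzx : z ≤ x)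
    (htx : t ≤ x) (ht : t ∈ atoms β) (htz : ¬ t ≤ z) :
    ∃ y ≤ x, y ∈ joinSet {z, t} ∧ z ⋖ y := by
  obtain ⟨y, hy, hyx⟩ :=
    hLG.exists_mem_joinSet_le (Set.insert_subset hzx (Set.singleton_subset_iff.mpr htx))
  refine ⟨y, hyx, hy, (coe_covBy_coe_iff_of_ordConnected (u := (⟨z, hzx⟩ : {u : β // u ≤ x}))
    (v := ⟨y, hyx⟩) Set.ordConnected_Iic).mpr ?_⟩
  have hub : ∀ w : {u : β // u ≤ x}, w ∈ upperBounds {⟨z, hzx⟩, ⟨t, htx⟩} ↔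
      (w : β) ∈ upperBounds {z, t} := by
    simp [upperBounds_insert, ← Subtype.coe_le_coe]
  rw [(hLG.2 x).2]
  exact ⟨⟨t, htx⟩, (rk_Iic x _).trans ht, htz,
    (hub _).mpr hy.1, fun w hw hwy => Subtype.ext (hy.2 w ((hub w).mp hw) hwy)⟩

lemma mem_joinSet_insert (hLG : IsLocallyGeometric β) {x z t y : β} {T : Set β}
    (hz : z ∈ joinSet T) (hy : y ∈ joinSet {z, t}) (hyx : y ≤ x) :
    y ∈ joinSet (insert t T) := by
  have hzy : z ≤ y := hy.1 (Set.mem_insert _ _)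
  refine ⟨Set.insert_subset (hy.1 (by simp)) fun s hs => (hz.1 hs).trans hzy,
    fun w hw hwy => hy.2 w ?_ hwy⟩
  obtain ⟨j, hj, hjw⟩ := hLG.exists_mem_joinSet_le fun s hs => hw (Set.mem_insert_of_mem _ hs)
  have hjz : j = z := hLG.eq_of_mem_joinSet_of_le hj (hjw.trans (hwy.trans hyx)) hz (hzy.trans hyx)
  exact Set.insert_subset (hjz ▸ hjw) (Set.singleton_subset_iff.mpr (hw (Set.mem_insert _ _)))

lemma coe_covBy_coe_of_covBy_genSub (hLG : IsLocallyGeometric β) {B : Set β}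
    (hB : B ⊆ atoms β) {z y : {w : β // w ∈ genSub B}} (h : z ⋖ y) : (z : β) ⋖ y := by
  obtain ⟨T, hTB, hyT⟩ := mem_genSub_iff.mp y.2
  obtain ⟨t, htT, htz⟩ : ∃ t ∈ T, ¬ t ≤ z := by
    by_contra! hT
    exact h.lt.ne (Subtype.ext (hyT.2 z hT h.le))
  obtain ⟨y', hy'y, hy', hzy'⟩ :=
    hLG.exists_covBy_mem_joinSet_pair h.le (hyT.1 htT) (hB (hTB htT)) htz
  obtain ⟨T', hT'B, hzT'⟩ := mem_genSub_iff.mp z.2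
  have hy'B : y' ∈ genSub B := mem_genSub_iff.mpr
    ⟨insert t T', Set.insert_subset (hTB htT) hT'B, hLG.mem_joinSet_insert hzT' hy' hy'y⟩
  rcases hy'y.eq_or_lt with rfl | hlt
  · exact hzy'
  · exact (h.2 (c := ⟨y', hy'B⟩) hzy'.lt hlt).elim

end IsLocallyGeometric

section Mobius

variable {γ : Type*} [PartialOrder γ] [Fintype γ]

lemma sum_filter_le_eq_add_sum_filter_lt (f : γ → ℤ) (x : γ) :
    ∑ y ∈ Finset.univ.filter (· ≤ x), f y = f x + ∑ y ∈ Finset.univ.filter (· < x), f y := by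
  have : Finset.univ.filter (· ≤ x) = insert x (Finset.univ.filter (· < x)) := by
    ext y
    simp [le_iff_eq_or_lt]
  rw [this, Finset.sum_insert (by simp)]

variable [OrderBot γ]

lemma sum_mob_bot_filter_le (x : γ) :
    ∑ y ∈ Finset.univ.filter (· ≤ x), mob ⊥ y = if x = ⊥ then 1 else 0 := by
  rw [sum_filter_le_eq_add_sum_filter_lt]
  rcases eq_or_ne x ⊥ with rfl | hx
  · rw [mob, if_pos rfl, if_pos rfl, add_eq_left]
    exact Finset.sum_eq_zero fun y hy => absurd (Finset.mem_filter.mp hy).2 not_lt_bot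
  · rw [mob, if_neg (Ne.symm hx), if_pos (bot_lt_iff_ne_bot.mpr hx), if_neg hx,
      Finset.sum_attach _ (mob ⊥)]
    simp only [bot_le, true_and, neg_add_cancel]

lemma eq_mob_bot_of_sum_filter_le (g : γ → ℤ)
    (hg : ∀ x, ∑ y ∈ Finset.univ.filter (· ≤ x), g y = if x = ⊥ then 1 else 0) (x : γ) :
    g x = mob ⊥ x := by
  induction x using WellFoundedLT.induction with
  | _ x ih =>
    have h := (hg x).trans (sum_mob_bot_filter_le x).symm
    rw [sum_filter_le_eq_add_sum_filter_lt, sum_filter_le_eq_add_sum_filter_lt,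
      Finset.sum_congr rfl fun y hy => ih y (by simpa using hy)] at h
    exact add_right_cancel h

end Mobius

section CrossCut

variable {β γ : Type*} [PartialOrder β] [Fintype β] [PartialOrder γ] [Fintype γ]

lemma card_filter_le_and_apply_mem (e : γ ↪o β) {J : Set β} (hJ : J ⊆ Set.range e) (x : γ) :
    (Finset.univ.filter fun y => y ≤ x ∧ e y ∈ J).card =
      (Finset.univ.filter fun z => z ≤ e x ∧ z ∈ J).card := by
  refine Finset.card_nbij e (fun y hy => ?_) e.injective.injOn fun z hz => ?_
  · simpa using hy
  · simp only [Finset.coe_filter, Finset.mem_univ, true_and, Set.mem_ofPred_eq] at hz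
    obtain ⟨y, rfl⟩ := hJ hz.2
    exact ⟨y, by simpa using hz, rfl⟩

variable [OrderBot β] [OrderBot γ]

/-- Cross-cut formula `μ(0̂, x) = ∑_{S ⊆ B, e x ∈ ⋁ F(S)} (-1)^|S|`, joins taken in `β`. It rests
on `card_filter_le_and_mem_joinSet`: below any element, a set has exactly one minimal upper bound
or none, so `∑_{y ≤ x} [e y ∈ ⋁ F(S)] = [S ≤ e x]`. -/
theorem IsLocallyGeometric.mob_bot_eq_sum_powerset (hLG : IsLocallyGeometric β) (e : γ ↪o β)
    (B : Finset β) (F : Finset β → Set β)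
    (hrange : ∀ S ∈ B.powerset, joinSet (F S) ⊆ Set.range e)
    (hF : ∀ S ∈ B.powerset, ∀ x, F S ⊆ Set.Iic (e x) ↔ ∀ b ∈ S, b ≤ e x)
    (hB : ∀ x, (∀ b ∈ B, ¬ b ≤ e x) ↔ x = ⊥) (x : γ) :
    mob ⊥ x = ∑ S ∈ B.powerset, (-1) ^ S.card * if e x ∈ joinSet (F S) then 1 else 0 := by
  refine (eq_mob_bot_of_sum_filter_le (fun x => ∑ S ∈ B.powerset,
    (-1) ^ S.card * if e x ∈ joinSet (F S) then 1 else 0) (fun x => ?_) x).symm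
  rw [Finset.sum_comm]
  calc ∑ S ∈ B.powerset, ∑ y ∈ Finset.univ.filter (· ≤ x),
        (-1) ^ S.card * (if e y ∈ joinSet (F S) then 1 else 0 : ℤ)
      = ∑ S ∈ B.powerset, if S ⊆ B.filter (· ≤ e x) then (-1) ^ S.card else 0 := by
        refine Finset.sum_congr rfl fun S hS => ?_
        rw [← Finset.mul_sum, Finset.sum_boole, Finset.filter_filter,
          card_filter_le_and_apply_mem e (hrange S hS), hLG.card_filter_le_and_mem_joinSet,
          hF S hS]
        have hiff : (∀ b ∈ S, b ≤ e x) ↔ S ⊆ B.filter (· ≤ e x) := by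
          simp only [Finset.subset_iff, Finset.mem_filter]
          exact ⟨fun h b hb => ⟨Finset.mem_powerset.mp hS hb, h b hb⟩, fun h b hb => (h hb).2⟩
        simp only [hiff, Nat.cast_ite, Nat.cast_one, Nat.cast_zero, mul_ite, mul_one, mul_zero]
    _ = ∑ S ∈ (B.filter (· ≤ e x)).powerset, (-1) ^ S.card := by
        rw [← Finset.sum_filter]
        congr 1
        ext S
        simpa using fun h => h.trans (Finset.filter_subset _ B)
    _ = if x = ⊥ then 1 else 0 := by
        rw [Finset.sum_powerset_neg_one_pow_card]
        exact if_congr (Finset.filter_eq_empty_iff.trans (hB x)) rfl rfl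

end CrossCut

section CharPoly

variable {β γ : Type*} [PartialOrder β] [Fintype β] [PartialOrder γ] [Fintype γ]

noncomputable def corankPoly (J : Set β) : ℤ[X] :=
  ∑ z ∈ Finset.univ.filter (· ∈ J), X ^ (prk β - rk z)

lemma rk_le_prk (x : β) : rk x ≤ prk β :=
  Finset.le_sup (Finset.mem_univ x)

lemma corankPoly_eq_sum_apply (e : γ ↪o β) {J : Set β} (hJ : J ⊆ Set.range e) :
    corankPoly J = ∑ x : γ, if e x ∈ J then X ^ (prk β - rk (e x)) else 0 := by
  rw [corankPoly, ← Finset.sum_filter]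
  refine (Finset.sum_nbij e (fun x hx => by simpa using hx) e.injective.injOn
    (fun z hz => ?_) fun _ _ => rfl).symm
  obtain ⟨x, rfl⟩ := hJ (Finset.mem_filter.mp hz).2
  exact ⟨x, by simpa using hz, rfl⟩

variable [OrderBot γ]

lemma prk_add_le_of_rk_apply (e : γ ↪o β) {c : ℕ} (hrk : ∀ x, rk (e x) = rk x + c) :
    prk γ + c ≤ prk β := by
  obtain ⟨x, -, hx⟩ := Finset.exists_mem_eq_sup Finset.univ Finset.univ_nonempty (rk (α := γ))
  rw [prk, hx, ← hrk]
  exact rk_le_prk _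

lemma X_pow_mul_charPoly_eq_sum_powerset (e : γ ↪o β) {c : ℕ}
    (hrk : ∀ x, rk (e x) = rk x + c) (B : Finset β) (F : Finset β → Set β)
    (hrange : ∀ S ∈ B.powerset, joinSet (F S) ⊆ Set.range e)
    (hmob : ∀ x, mob ⊥ x =
      ∑ S ∈ B.powerset, (-1) ^ S.card * if e x ∈ joinSet (F S) then 1 else 0) :
    X ^ (prk β - prk γ - c) * charPoly γ =
      ∑ S ∈ B.powerset, (-1) ^ S.card * corankPoly (joinSet (F S)) := by
  have hprk := prk_add_le_of_rk_apply e hrk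
  have hterm : ∀ x : γ, X ^ (prk β - prk γ - c) * (C (mob ⊥ x) * X ^ (prk γ - rk x)) =
      ∑ S ∈ B.powerset, (-1) ^ S.card *
        if e x ∈ joinSet (F S) then X ^ (prk β - rk (e x)) else 0 := by
    intro x
    have hX : X ^ (prk β - prk γ - c) * X ^ (prk γ - rk x) = (X ^ (prk β - rk (e x)) : ℤ[X]) := by
      rw [← pow_add, hrk]
      have := rk_le_prk x
      congr 1
      omega
    rw [mul_left_comm, hX, hmob]
    simp only [map_sum, map_mul, map_pow, map_neg, map_one, Finset.sum_mul, mul_assoc,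
      apply_ite C, map_zero, ite_mul, zero_mul, one_mul]
  rw [charPoly, Finset.mul_sum, Finset.sum_congr rfl fun x _ => hterm x, Finset.sum_comm]
  refine Finset.sum_congr rfl fun S hS => ?_
  rw [← Finset.mul_sum, corankPoly_eq_sum_apply e (hrange S hS)]

end CharPoly

namespace IsLocallyGeometric

variable {β : Type*} [PartialOrder β] [Fintype β] [OrderBot β]

lemma charPoly_eq_sum_powerset (hLG : IsLocallyGeometric β) :
    charPoly β = ∑ S ∈ (atoms β).toFinset.powerset,
      (-1) ^ S.card * corankPoly (joinSet (S : Set β)) := by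
  let e := (OrderIso.refl β).toOrderEmbedding
  have hB : ∀ x, (∀ b ∈ (atoms β).toFinset, ¬ b ≤ e x) ↔ x = ⊥ := by
    refine fun x => ⟨fun h => by_contra fun hx => ?_, ?_⟩
    · obtain ⟨b, hb, hbx⟩ := exists_mem_atoms_le hx
      exact h b (Set.mem_toFinset.mpr hb) hbx
    · rintro rfl b hb hbx
      exact ne_bot_of_mem_atoms (Set.mem_toFinset.mp hb) (le_bot_iff.mp hbx)
  have := X_pow_mul_charPoly_eq_sum_powerset e (c := 0) (fun _ => rfl) _ (fun S => (S : Set β))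
    (fun _ _ => by simp [e]) (hLG.mob_bot_eq_sum_powerset e _ _ (fun _ _ => by simp [e])
      (fun _ _ _ => by simp [Set.subset_def]) hB)
  simpa using this

lemma X_pow_mul_charPoly_genSub (hLG : IsLocallyGeometric β) {B : Set β} (hB : B ⊆ atoms β) :
    X ^ (prk β - prk {y : β // y ∈ genSub B}) * charPoly {y : β // y ∈ genSub B} =
      ∑ S ∈ B.toFinset.powerset, (-1) ^ S.card * corankPoly (joinSet (S : Set β)) := by
  let e := OrderEmbedding.subtype (· ∈ genSub B)
  have hrk (x) : rk (e x) = rk x + 0 := by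
    rw [rk_apply_eq_rk_add_of_covBy hLG.1 e (fun _ _ => hLG.coe_covBy_coe_of_covBy_genSub hB) x]
    exact congrArg (rk x + ·) (rk_bot (β := β))
  have hrange : ∀ S ∈ B.toFinset.powerset, joinSet (S : Set β) ⊆ Set.range e := by
    intro S hS z hz
    refine ⟨⟨z, mem_genSub_iff.mpr ⟨S, fun b hb => ?_, hz⟩⟩, rfl⟩
    exact Set.mem_toFinset.mp (Finset.mem_powerset.mp hS hb)
  have hbot : ∀ x, (∀ b ∈ B.toFinset, ¬ b ≤ e x) ↔ x = ⊥ := by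
    refine fun x => ⟨fun h => ?_, ?_⟩
    · obtain ⟨T, hTB, hxT⟩ := mem_genSub_iff.mp x.2
      rcases T.eq_empty_or_nonempty with rfl | ⟨t, ht⟩
      · rw [joinSet_empty] at hxT
        exact Subtype.ext hxT
      · exact (h t (Set.mem_toFinset.mpr (hTB ht)) (hxT.1 ht)).elim
    · rintro rfl b hb hbx
      exact ne_bot_of_mem_atoms (hB (Set.mem_toFinset.mp hb)) (le_bot_iff.mp hbx)
  simpa using X_pow_mul_charPoly_eq_sum_powerset e hrk _ (fun S => (S : Set β)) hrange
    (hLG.mob_bot_eq_sum_powerset e _ _ hrange (fun _ _ _ => by simp [Set.subset_def]) hbot)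

lemma X_pow_mul_charPoly_Ici (hLG : IsLocallyGeometric β) {a : β} (ha : a ∈ atoms β) :
    X ^ (prk β - prk {y : β // a ≤ y} - 1) * charPoly {y : β // a ≤ y} =
      ∑ S ∈ ((atoms β).toFinset.erase a).powerset,
        (-1) ^ S.card * corankPoly (joinSet (insert a (S : Set β))) := by
  let e := OrderEmbedding.subtype (a ≤ ·)
  have hrk (x) : rk (e x) = rk x + 1 := by
    rw [rk_apply_eq_rk_add_of_covBy hLG.1 e
      (fun _ _ => (coe_covBy_coe_iff_of_ordConnected Set.ordConnected_Ici).mpr) x]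
    exact congrArg (rk x + ·) ha
  have hrange : ∀ S ∈ ((atoms β).toFinset.erase a).powerset,
      joinSet (insert a (S : Set β)) ⊆ Set.range e :=
    fun _ _ z hz => ⟨⟨z, hz.1 (Set.mem_insert _ _)⟩, rfl⟩
  have hF : ∀ S ∈ ((atoms β).toFinset.erase a).powerset, ∀ x,
      insert a (S : Set β) ⊆ Set.Iic (e x) ↔ ∀ b ∈ S, b ≤ e x :=
    fun _ _ x => by simp [Set.subset_def, e, x.2]
  have hbot : ∀ x, (∀ b ∈ (atoms β).toFinset.erase a, ¬ b ≤ e x) ↔ x = ⊥ := by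
    refine fun x => ⟨fun h => Subtype.ext (by_contra fun hxa => ?_), ?_⟩
    · obtain ⟨b, hb, hba, hbx⟩ := hLG.exists_mem_atoms_ne_le (lt_of_le_of_ne x.2 (Ne.symm hxa))
      exact h b (by simp [hb, hba]) hbx
    · rintro rfl b hb hba
      rw [Finset.mem_erase, Set.mem_toFinset] at hb
      exact hb.1 (eq_of_mem_atoms_of_le ha hb.2 hba)
  exact X_pow_mul_charPoly_eq_sum_powerset e hrk _ _ hrange
    (hLG.mob_bot_eq_sum_powerset e _ _ hrange hF hbot)

theorem charPoly_eq_sub (hLG : IsLocallyGeometric β) {a : β} (ha : a ∈ atoms β) :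
    charPoly β =
      X ^ (prk β - prk {y : β // y ∈ genSub (atoms β \ {a})}) *
          charPoly {y : β // y ∈ genSub (atoms β \ {a})} -
        X ^ (prk β - prk {y : β // a ≤ y} - 1) * charPoly {y : β // a ≤ y} := by
  have hsplit := hLG.charPoly_eq_sum_powerset
  rw [← Finset.insert_erase (Set.mem_toFinset.mpr ha),
    Finset.sum_powerset_insert (Finset.notMem_erase a _)] at hsplit
  rw [hsplit, hLG.X_pow_mul_charPoly_genSub Set.sdiff_subset, hLG.X_pow_mul_charPoly_Ici ha,
    sub_eq_add_neg, ← Finset.sum_neg_distrib]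
  congr 1
  · exact Finset.sum_congr (by simp [Finset.sdiff_singleton_eq_erase]) fun _ _ => rfl
  refine Finset.sum_congr rfl fun S hS => ?_
  have haS : a ∉ S := fun h => Finset.notMem_erase a _ (Finset.mem_powerset.mp hS h)
  rw [Finset.card_insert_of_notMem haS, Finset.coe_insert, pow_succ]
  ring

end IsLocallyGeometric

/-- Every inductive poset is divisional. -/
theorem inductive_isDivisional (β : Type) [po : PartialOrder β] [fin : Fintype β]
    [bo : OrderBot β] (h : IsInductivePoset β po fin bo) :
    IsDivisionalPoset β po fin bo := by
  induction h with
  | triv β h => exact IsDivisionalPoset.triv β h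
  | step β hLG a ha _ _ hdvd ihres =>
    refine IsDivisionalPoset.step β hLG a ha ihres ?_
    rw [hLG.charPoly_eq_sub ha]
    exact dvd_sub (hdvd.mul_left _) (dvd_mul_left _ _)

end PosetArr
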